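/- arXiv:q-alg/9608003 — 2 statements merged into one kernel-verified Lean document; each statement's English description precedes it below -/
import Mathlib

section
/- Let V = ℂ(q)^n with standard basis |0⟩,…,|n-1⟩ and let the operators x_i^±(l), φ_i(m), ψ_i(m) act on V ⊗ ℂ(q)[z,z^{-1}] via the evaluation formulas: x_i^+(w)|j⟩ = δ_{ij} δ(w/(q^i z))|i-1⟩, x_i^-(w)|j⟩ = δ_{i-1,j} δ(w/(q^i z))|i⟩, φ_i(w)|i-1⟩ = (q^{-1} - q^{-i+1} w/z)/(1 - q^{-i} w/z)|i-1⟩, φ_i(w)|i⟩ = (q - q^{-i-1} w/z)/(1 - q^{-i} w/z)|i⟩, φ_i(w)|j⟩ = |j⟩ otherwise, with c acting by 0. Then the commutator relation [x_i^+(z'), x_j^-(w)] = (δ_{ij}/(q - q^{-1}))(δ(z'/w)ψ_i(w) - δ(z'/w)φ_i(z')) of U_q(ŝl_n) at level 0 holds on each basis vector |j⟩. -/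
/-!
STATEMENT 4: The n-dimensional evaluation (vector) representation of U_q(ŝl_n) at level 0
(c = 0) satisfies the commutator relation
  [x_i^+(z'), x_j^-(w)] = (δ_{ij}/(q - q⁻¹)) (δ(z'/w) ψ_i(w) - δ(z'/w) φ_i(z'))
on each basis vector |j'⟩.  Everything is expanded coefficientwise: the operators are
recorded as matrices of Laurent coefficients, with
  x_i^+(l)|j⟩ = δ_{ij} (q^i z)^l |i-1⟩,   x_i^-(m)|j⟩ = δ_{i-1,j} (q^i z)^m |i⟩,
and ψ_i(r) (r ≥ 0), φ_i(r) (r ≤ 0) the expansion coefficients of the rational functions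
in z/w (resp. w/z) given in Lemma 3.1.  The coefficient of z'^{-l} w^{-m} in
δ(z'/w)ψ_i(w) (resp. δ(z'/w)φ_i(z')) is ψ_i(l+m) (resp. φ_i(l+m)).
Conventions: |-1⟩ = |n⟩ = 0.
-/

noncomputable section

variable (F : Type*) [Field F]

/-- (q^i z)^l -/
def evCoef (q z : Fˣ) (i l : ℤ) : F := ((q ^ i * z) ^ l : Fˣ)

/-- matrix of x_i^+(l):  x_i^+(l)|j⟩ = δ_{ij} (q^i z)^l |i-1⟩. -/
def xpM (q z : Fˣ) (n : ℕ) (i l : ℤ) : Matrix (Fin n) (Fin n) F :=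
  fun r c => if (r : ℤ) = i - 1 ∧ (c : ℤ) = i then evCoef F q z i l else 0

/-- matrix of x_i^-(m):  x_i^-(m)|j⟩ = δ_{i-1,j} (q^i z)^m |i⟩. -/
def xmM (q z : Fˣ) (n : ℕ) (i m : ℤ) : Matrix (Fin n) (Fin n) F :=
  fun r c => if (r : ℤ) = i ∧ (c : ℤ) = i - 1 then evCoef F q z i m else 0

/-- matrix of ψ_i(r), the coefficient of w^{-r} in the expansion of ψ_i(w) in ℂ(q)[[z/w]];
ψ_i(r) = 0 for r < 0. -/
def psiM (q z : Fˣ) (n : ℕ) (i r : ℤ) : Matrix (Fin n) (Fin n) F :=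
  Matrix.diagonal fun j =>
    if r = 0 then
      (if (j : ℤ) = i - 1 then (q : F) else if (j : ℤ) = i then (q : F)⁻¹ else 1)
    else if 0 < r then
      (if (j : ℤ) = i - 1 then ((q : F) - (q : F)⁻¹) * evCoef F q z i r
       else if (j : ℤ) = i then ((q : F)⁻¹ - (q : F)) * evCoef F q z i r else 0)
    else 0

/-- matrix of φ_i(r), the coefficient of z^{-r} in the expansion of φ_i(z) in ℂ(q)[[w/z]];
φ_i(r) = 0 for r > 0. -/
def phiM (q z : Fˣ) (n : ℕ) (i r : ℤ) : Matrix (Fin n) (Fin n) F :=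
  Matrix.diagonal fun j =>
    if r = 0 then
      (if (j : ℤ) = i - 1 then (q : F)⁻¹ else if (j : ℤ) = i then (q : F) else 1)
    else if r < 0 then
      (if (j : ℤ) = i - 1 then ((q : F)⁻¹ - (q : F)) * evCoef F q z i r
       else if (j : ℤ) = i then ((q : F) - (q : F)⁻¹) * evCoef F q z i r else 0)
    else 0

/-! Both products x⁺_i(l) x⁻_i(m) and x⁻_i(m) x⁺_i(l) are (q^i z)^{l+m} times the projections
onto |i-1⟩ and |i⟩, so their commutator is (q^i z)^{l+m} h_i with h_i = E_{i-1,i-1} - E_{i,i};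
for i ≠ j both products vanish. On the other side, for r ≠ 0 exactly one of ψ_i(r), φ_i(r) is
nonzero, and at r = 0 their constant terms differ by (q - q⁻¹) h_i, so
ψ_i(r) - φ_i(r) = (q - q⁻¹)(q^i z)^r h_i for every r: this is the coefficientwise form of
δ(z'/w)(ψ_i(w) - φ_i(z')). -/

def cartanM (n : ℕ) (i : ℤ) : Matrix (Fin n) (Fin n) F :=
  Matrix.diagonal fun j => if (j : ℤ) = i - 1 then 1 else if (j : ℤ) = i then -1 else 0

lemma evCoef_add (q z : Fˣ) (i l m : ℤ) :
    evCoef F q z i (l + m) = evCoef F q z i l * evCoef F q z i m := by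
  simp only [evCoef, zpow_add, Units.val_mul]

lemma psiM_sub_phiM (q z : Fˣ) (n : ℕ) (i r : ℤ) :
    psiM F q z n i r - phiM F q z n i r
      = (((q : F) - (q : F)⁻¹) * evCoef F q z i r) • cartanM F n i := by
  ext a b
  simp only [psiM, phiM, cartanM, Matrix.sub_apply, Matrix.smul_apply, Matrix.diagonal_apply]
  rcases lt_trichotomy r 0 with hr | rfl | hr <;> split_ifs <;>
    first | omega | simp [evCoef] <;> ring

lemma xpM_mul_xmM_of_ne (q z : Fˣ) (n : ℕ) {i j : ℤ} (hij : i ≠ j) (l m : ℤ) :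
    xpM F q z n i l * xmM F q z n j m = 0 := by
  ext r c
  rw [Matrix.mul_apply]
  refine Finset.sum_eq_zero fun k _ => ?_
  simp only [xpM, xmM]
  split_ifs <;> first | omega | simp

lemma xmM_mul_xpM_of_ne (q z : Fˣ) (n : ℕ) {i j : ℤ} (hij : i ≠ j) (l m : ℤ) :
    xmM F q z n j m * xpM F q z n i l = 0 := by
  ext r c
  rw [Matrix.mul_apply]
  refine Finset.sum_eq_zero fun k _ => ?_
  simp only [xpM, xmM]
  split_ifs <;> first | omega | simp

lemma xpM_mul_xmM_self (q z : Fˣ) (n : ℕ) {i : ℤ} (hi0 : 0 ≤ i) (hin : i < n) (l m : ℤ) :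
    xpM F q z n i l * xmM F q z n i m
      = Matrix.diagonal fun r : Fin n =>
          if (r : ℤ) = i - 1 then evCoef F q z i (l + m) else 0 := by
  obtain ⟨k₀, hk₀⟩ : ∃ k : Fin n, (k : ℤ) = i := ⟨⟨i.toNat, by omega⟩, by simp [hi0]⟩
  ext r c
  rw [Matrix.mul_apply, Fintype.sum_eq_single k₀ fun k hk => ?_]
  · simp only [xpM, xmM, Matrix.diagonal_apply, hk₀, evCoef_add]
    split_ifs <;> first | omega | simp_all
  · have : (k : ℤ) ≠ i := fun h => hk (Fin.ext (by omega))
    simp [xpM, this]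

lemma xmM_mul_xpM_self (q z : Fˣ) (n : ℕ) {i : ℤ} (hi1 : 1 ≤ i) (hin : i ≤ n) (l m : ℤ) :
    xmM F q z n i m * xpM F q z n i l
      = Matrix.diagonal fun r : Fin n =>
          if (r : ℤ) = i then evCoef F q z i (l + m) else 0 := by
  obtain ⟨k₀, hk₀⟩ : ∃ k : Fin n, (k : ℤ) = i - 1 := ⟨⟨(i - 1).toNat, by omega⟩, by simp; omega⟩
  ext r c
  rw [Matrix.mul_apply, Fintype.sum_eq_single k₀ fun k hk => ?_]
  · simp only [xpM, xmM, Matrix.diagonal_apply, hk₀, evCoef_add]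
    split_ifs <;> first | omega | simp_all [mul_comm]
  · have : (k : ℤ) ≠ i - 1 := fun h => hk (Fin.ext (by omega))
    simp [xmM, this]

lemma xpM_xmM_commutator_self (q z : Fˣ) (n : ℕ) {i : ℤ} (hi1 : 1 ≤ i) (hin : i ≤ (n : ℤ) - 1)
    (l m : ℤ) :
    xpM F q z n i l * xmM F q z n i m - xmM F q z n i m * xpM F q z n i l
      = evCoef F q z i (l + m) • cartanM F n i := by
  rw [xpM_mul_xmM_self F q z n (by omega) (by omega), xmM_mul_xpM_self F q z n hi1 (by omega),
    cartanM]
  ext r c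
  simp only [Matrix.sub_apply, Matrix.smul_apply, Matrix.diagonal_apply]
  split_ifs <;> first | omega | simp

theorem stmt4 (q z : Fˣ) (hq : ((q : F)) ^ 2 ≠ 1) (n : ℕ)
    (i j : ℤ) (hi1 : 1 ≤ i) (hi2 : i ≤ (n : ℤ) - 1) :
    ∀ l m : ℤ,
      xpM F q z n i l * xmM F q z n j m - xmM F q z n j m * xpM F q z n i l
        = (if i = j then ((q : F) - (q : F)⁻¹)⁻¹ else 0) •
            (psiM F q z n i (l + m) - phiM F q z n i (l + m)) := by
  intro l m
  rcases eq_or_ne i j with rfl | hij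
  · have hq' : (q : F) - (q : F)⁻¹ ≠ 0 := fun h => hq <| by
      rw [sq]
      nth_rw 2 [sub_eq_zero.1 h]
      exact mul_inv_cancel₀ q.ne_zero
    rw [xpM_xmM_commutator_self F q z n hi1 hi2, psiM_sub_phiM, if_pos rfl, smul_smul,
      ← mul_assoc, inv_mul_cancel₀ hq', one_mul]
  · simp [hij, xpM_mul_xmM_of_ne, xmM_mul_xpM_of_ne]

end
end

section
/- The q-deformed A_{n-1} Cartan matrix identity: for k ≠ 0 and 1 ≤ i,j ≤ n-1, −[min(i,j-1)k][min(n-i,n-j+1)k] + (q^k + q^{-k})[min(i,j)k][min(n-i,n-j)k] − [min(i,j+1)k][min(n-i,n-j-1)k] = δ_{ij}[k][nk], where boundary terms with index 0 or n are interpreted via [0] = 0. -/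
/-!
STATEMENT 12: The q-deformed A_{n-1} Cartan matrix identity: for k ≠ 0 and 1 ≤ i,j ≤ n-1,
  −[min(i,j-1)k][min(n-i,n-j+1)k] + (q^k + q^{-k})[min(i,j)k][min(n-i,n-j)k]
    − [min(i,j+1)k][min(n-i,n-j-1)k] = δ_{ij}[k][nk],
where [m] = (q^m - q^{-m})/(q - q⁻¹) and boundary terms with index 0 or n are interpreted
via [0] = 0 (automatic here, since min(i, 0) = 0 and min(n-i, 0) = 0 in the given ranges).
-/

noncomputable section

/-- q-integer [m]. -/
def qInt (K : Type*) [Field K] (q : Kˣ) (m : ℤ) : K :=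
  ((q : K) ^ m - (q : K) ^ (-m)) / ((q : K) - (q : K)⁻¹)

lemma qInt_eq (K : Type*) [Field K] (q : Kˣ) (m : ℤ) :
    qInt K q m = ((q : K) ^ m - ((q : K) ^ m)⁻¹) / ((q : K) - (q : K)⁻¹) := by
  rw [qInt, zpow_neg]

lemma qsub_ne (K : Type*) [Field K] (q : Kˣ) (hq : (q : K) ^ 2 ≠ 1) :
    (q : K) - (q : K)⁻¹ ≠ 0 := by
  intro h
  apply hq
  have h' : (q : K) = (q : K)⁻¹ := sub_eq_zero.mp h
  calc (q : K) ^ 2 = (q : K) * (q : K) := sq (q : K)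
    _ = (q : K) * (q : K)⁻¹ := by rw [← h']
    _ = 1 := mul_inv_cancel₀ q.ne_zero

lemma L1 (K : Type*) [Field K] (q : Kˣ) (hq : (q : K) ^ 2 ≠ 1) (a k : ℤ) :
    ((q : K) ^ k + (q : K) ^ (-k)) * qInt K q a = qInt K q (a + k) + qInt K q (a - k) := by
  have hq0 : (q : K) ≠ 0 := q.ne_zero
  have hd := qsub_ne K q hq
  rw [qInt_eq, qInt_eq, qInt_eq, zpow_add₀ hq0, zpow_sub₀ hq0, zpow_neg]
  have hA : (q : K) ^ a ≠ 0 := zpow_ne_zero _ hq0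
  have hC : (q : K) ^ k ≠ 0 := zpow_ne_zero _ hq0
  field_simp
  ring

lemma Ldiag (K : Type*) [Field K] (q : Kˣ) (hq : (q : K) ^ 2 ≠ 1) (a b k : ℤ) :
    -(qInt K q (a - k) * qInt K q b)
      + ((q : K) ^ k + (q : K) ^ (-k)) * (qInt K q a * qInt K q b)
      - qInt K q a * qInt K q (b - k)
    = qInt K q k * qInt K q (a + b) := by
  have hq0 : (q : K) ≠ 0 := q.ne_zero
  have hd := qsub_ne K q hq
  rw [qInt_eq, qInt_eq, qInt_eq, qInt_eq, qInt_eq, qInt_eq,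
    zpow_sub₀ hq0, zpow_sub₀ hq0, zpow_add₀ hq0, zpow_neg]
  have hA : (q : K) ^ a ≠ 0 := zpow_ne_zero _ hq0
  have hB : (q : K) ^ b ≠ 0 := zpow_ne_zero _ hq0
  have hC : (q : K) ^ k ≠ 0 := zpow_ne_zero _ hq0
  field_simp
  ring

theorem stmt12 (K : Type*) [Field K] (q : Kˣ) (hq : (q : K) ^ 2 ≠ 1)
    (n : ℕ) (hn : 2 ≤ n) (i j k : ℤ)
    (hi1 : 1 ≤ i) (hi2 : i ≤ (n : ℤ) - 1) (hj1 : 1 ≤ j) (hj2 : j ≤ (n : ℤ) - 1)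
    (hk : k ≠ 0) :
    -(qInt K q (min i (j - 1) * k) * qInt K q (min ((n : ℤ) - i) ((n : ℤ) - j + 1) * k))
      + ((q : K) ^ k + (q : K) ^ (-k)) *
          (qInt K q (min i j * k) * qInt K q (min ((n : ℤ) - i) ((n : ℤ) - j) * k))
      - qInt K q (min i (j + 1) * k) * qInt K q (min ((n : ℤ) - i) ((n : ℤ) - j - 1) * k)
    = (if i = j then 1 else 0) * (qInt K q k * qInt K q ((n : ℤ) * k)) := by
  rcases lt_trichotomy i j with hij | hij | hij
  · -- i < j : everything factors through qInt (i*k)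
    rw [min_eq_left (by omega : i ≤ j - 1), min_eq_left (le_of_lt hij),
      min_eq_left (by omega : i ≤ j + 1),
      min_eq_right (by omega : (n : ℤ) - j + 1 ≤ (n : ℤ) - i),
      min_eq_right (by omega : (n : ℤ) - j ≤ (n : ℤ) - i),
      min_eq_right (by omega : (n : ℤ) - j - 1 ≤ (n : ℤ) - i),
      if_neg (by omega : ¬ i = j)]
    have e1 : ((n : ℤ) - j + 1) * k = ((n : ℤ) - j) * k + k := by ring
    have e2 : ((n : ℤ) - j - 1) * k = ((n : ℤ) - j) * k - k := by ring
    rw [e1, e2]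
    have := L1 K q hq (((n : ℤ) - j) * k) k
    linear_combination qInt K q (i * k) * this
  · -- i = j
    subst hij
    rw [min_eq_right (by omega : i - 1 ≤ i), min_self,
      min_eq_left (by omega : i ≤ i + 1),
      min_eq_left (by omega : (n : ℤ) - i ≤ (n : ℤ) - i + 1), min_self,
      min_eq_right (by omega : (n : ℤ) - i - 1 ≤ (n : ℤ) - i),
      if_pos rfl, one_mul]
    have e1 : (i - 1) * k = i * k - k := by ring
    have e2 : ((n : ℤ) - i - 1) * k = ((n : ℤ) - i) * k - k := by ring
    have e3 : (n : ℤ) * k = i * k + ((n : ℤ) - i) * k := by ring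
    rw [e1, e2, e3]
    exact Ldiag K q hq (i * k) (((n : ℤ) - i) * k) k
  · -- i > j : everything factors through qInt ((n-i)*k)
    rw [min_eq_right (by omega : j - 1 ≤ i), min_eq_right (le_of_lt hij),
      min_eq_right (by omega : j + 1 ≤ i),
      min_eq_left (by omega : (n : ℤ) - i ≤ (n : ℤ) - j + 1),
      min_eq_left (by omega : (n : ℤ) - i ≤ (n : ℤ) - j),
      min_eq_left (by omega : (n : ℤ) - i ≤ (n : ℤ) - j - 1),
      if_neg (by omega : ¬ i = j)]
    have e1 : (j - 1) * k = j * k - k := by ring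
    have e2 : (j + 1) * k = j * k + k := by ring
    rw [e1, e2]
    have := L1 K q hq (j * k) k
    linear_combination qInt K q (((n : ℤ) - i) * k) * this
  
end
end
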